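/- Let n ≥ 2 be a natural number, k ∈ ℂ, and let G be the n×n complex matrix with entries (indices 1,…,n): G_{i,i} = 2(k + n) for 1 ≤ i ≤ n − 1, G_{n,n} = 1, G_{i,i+1} = G_{i+1,i} = −(k + n) for 1 ≤ i ≤ n − 1, and all other entries 0. Then det G ≠ 0 if and only if k ≠ −n and k ≠ −n(n − 2)/(n − 1). -/

import Mathlib

/-!
With `t = k + n`, the matrix is tridiagonal: `t` times the Cartan matrix of type `A` except for
the last diagonal entry `1`. Expanding a tridiagonal determinant along its last row gives the
continuant recurrence `Dₘ₊₂ = dₘ₊₁ Dₘ₊₁ - aₘ bₘ Dₘ`, so the leading minors are `t ^ m (m + 1)`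
and `det G = t ^ (n - 1) (n - (n - 1) t)`, which vanishes exactly when `t = 0` or
`t = n / (n - 1)`.
-/

open Matrix

section Tridiagonal

variable {R : Type*} [CommRing R]

def tridiagonal (d a b : ℕ → R) (n : ℕ) : Matrix (Fin n) (Fin n) R :=
  of fun i j =>
    if (i : ℕ) = j then d i
    else if (i : ℕ) + 1 = j then b i
    else if (j : ℕ) + 1 = i then a j
    else 0

variable (d a b : ℕ → R)

theorem tridiagonal_congr_diag {d' : ℕ → R} {n : ℕ} (h : ∀ i < n, d i = d' i) :
    tridiagonal d a b n = tridiagonal d' a b n := by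
  ext i j
  simp [tridiagonal, h i i.isLt]

theorem tridiagonal_submatrix_castSucc (n : ℕ) :
    (tridiagonal d a b (n + 1)).submatrix Fin.castSucc Fin.castSucc = tridiagonal d a b n := by
  ext i j
  simp [tridiagonal]

theorem det_tridiagonal_zero : (tridiagonal d a b 0).det = 1 := det_isEmpty

theorem det_tridiagonal_one : (tridiagonal d a b 1).det = d 0 := by
  simp [tridiagonal]

/-- The minor of the entry `a n` in the last row: its last column is `b n` times a unit vector. -/
theorem det_tridiagonal_submatrix_castSucc_succAbove (n : ℕ) :
    ((tridiagonal d a b (n + 2)).submatrix Fin.castSucc (Fin.last n).castSucc.succAbove).det =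
      b n * (tridiagonal d a b n).det := by
  rw [det_succ_column _ (Fin.last n), Fin.sum_univ_castSucc]
  have hzero : ∀ i : Fin n, (tridiagonal d a b (n + 2)).submatrix Fin.castSucc
      (Fin.last n).castSucc.succAbove i.castSucc (Fin.last n) = 0 := by
    intro i
    simp only [submatrix_apply, Fin.succAbove_castSucc_self, Fin.succ_last, tridiagonal, of_apply,
      Fin.val_castSucc, Fin.val_last]
    rw [if_neg, if_neg, if_neg] <;> omega
  have hminor : ((tridiagonal d a b (n + 2)).submatrix Fin.castSucc
      (Fin.last n).castSucc.succAbove).submatrix (Fin.last n).succAbove (Fin.last n).succAbove =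
      tridiagonal d a b n := by
    ext i j
    simp [Fin.succAbove_of_castSucc_lt _ _ (Fin.castSucc_lt_castSucc_iff.mpr j.castSucc_lt_last),
      tridiagonal]
  have hentry : (tridiagonal d a b (n + 2)).submatrix Fin.castSucc
      (Fin.last n).castSucc.succAbove (Fin.last n) (Fin.last n) = b n := by
    simp [tridiagonal]
  simp only [hzero, hminor, hentry, mul_zero, zero_mul, Finset.sum_const_zero, zero_add,
    Fin.val_last, Even.neg_one_pow ⟨n, rfl⟩, one_mul]

theorem det_tridiagonal_succ_succ (n : ℕ) :
    (tridiagonal d a b (n + 2)).det =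
      d (n + 1) * (tridiagonal d a b (n + 1)).det - a n * b n * (tridiagonal d a b n).det := by
  rw [det_succ_row _ (Fin.last _), Fin.sum_univ_castSucc, Fin.sum_univ_castSucc]
  have hzero : ∀ j : Fin n, tridiagonal d a b (n + 2) (Fin.last _) j.castSucc.castSucc = 0 := by
    intro j
    simp only [tridiagonal, of_apply, Fin.val_castSucc, Fin.val_last]
    rw [if_neg, if_neg, if_neg] <;> omega
  have hdiag : tridiagonal d a b (n + 2) (Fin.last _) (Fin.last _) = d (n + 1) := by
    simp [tridiagonal]
  have hsub : tridiagonal d a b (n + 2) (Fin.last _) (Fin.last n).castSucc = a n := by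
    simp [tridiagonal, show n + 1 + 1 ≠ n by omega]
  have hsign : (-1 : R) ^ (n + 1 + n) = -1 :=
    Odd.neg_one_pow ⟨n, by ring⟩
  simp only [hzero, hdiag, hsub, mul_zero, zero_mul, Finset.sum_const_zero, zero_add,
    Fin.succAbove_last, tridiagonal_submatrix_castSucc,
    det_tridiagonal_submatrix_castSucc_succAbove, Fin.val_last, Fin.val_castSucc,
    hsign, Even.neg_one_pow ⟨n + 1, rfl⟩]
  ring

theorem det_tridiagonal_const (t : R) (n : ℕ) :
    (tridiagonal (fun _ ↦ 2 * t) (fun _ ↦ -t) (fun _ ↦ -t) n).det = t ^ n * (n + 1) := by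
  induction n using Nat.twoStepInduction with
  | zero => rw [det_tridiagonal_zero]; simp
  | one => rw [det_tridiagonal_one]; push_cast; ring
  | more n ih₀ ih₁ =>
    rw [det_tridiagonal_succ_succ, ih₀, ih₁]
    push_cast
    ring

def dressedCartan (t : R) (n : ℕ) : Matrix (Fin n) (Fin n) R :=
  tridiagonal (fun i ↦ if i = n - 1 then 1 else 2 * t) (fun _ ↦ -t) (fun _ ↦ -t) n

theorem det_dressedCartan (t : R) (m : ℕ) :
    (dressedCartan t (m + 2)).det = t ^ (m + 1) * ((m + 2) - (m + 1) * t) := by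
  have hlead : ∀ n ≤ m + 1, tridiagonal (fun i ↦ if i = m + 2 - 1 then 1 else 2 * t)
      (fun _ ↦ -t) (fun _ ↦ -t) n = tridiagonal (fun _ ↦ 2 * t) (fun _ ↦ -t) (fun _ ↦ -t) n :=
    fun n hn ↦ tridiagonal_congr_diag _ _ _ fun i hi ↦ if_neg (by omega)
  rw [dressedCartan, det_tridiagonal_succ_succ, hlead _ le_rfl, hlead _ (by omega),
    det_tridiagonal_const, det_tridiagonal_const, if_pos (by omega)]
  push_cast
  ring

end Tridiagonal

/-- The dressed Cartan matrix of `sl(n|1)` in the maximally asymmetric root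
system is nondegenerate precisely for `k ∉ {-n, -n(n-2)/(n-1)}`. -/
theorem det_dressed_cartan_asym_ne_zero_iff (n : ℕ) (hn : 2 ≤ n) (k : ℂ)
    (G : Matrix (Fin n) (Fin n) ℂ)
    (hG : ∀ i j : Fin n, G i j =
      if i = j then (if (i : ℕ) = n - 1 then 1 else 2 * (k + n))
      else if (i : ℕ) + 1 = (j : ℕ) ∨ (j : ℕ) + 1 = (i : ℕ) then -(k + n)
      else 0) :
    G.det ≠ 0 ↔ k ≠ -(n : ℂ) ∧ k ≠ -((n : ℂ) * ((n : ℂ) - 2)) / ((n : ℂ) - 1) := by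
  have hG_eq : G = dressedCartan (k + n) n := by
    ext i j
    rw [hG]
    simp only [dressedCartan, tridiagonal, of_apply, Fin.ext_iff]
    split_ifs <;> first | rfl | omega
  obtain ⟨m, rfl⟩ : ∃ m, n = m + 2 := ⟨n - 2, by omega⟩
  rw [hG_eq, det_dressedCartan, mul_ne_zero_iff, pow_ne_zero_iff (by omega)]
  push_cast
  have hm : (m : ℂ) + 2 - 1 ≠ 0 := by
    rw [show (m : ℂ) + 2 - 1 = m + 1 by ring]
    exact Nat.cast_add_one_ne_zero m
  refine and_congr (not_congr ?_) (not_congr ?_)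
  · constructor <;> intro h <;> linear_combination h
  · rw [eq_div_iff hm]
    constructor <;> intro h <;> linear_combination -h
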